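/- arXiv:1808.00891 — 3 statements merged into one kernel-verified Lean document; each statement's English description precedes it below -/
import Mathlib

section
/- For all natural numbers m, n and every complex number a, one has (a-n)_m = (a)_m + ∑_{k=1}^{m} ∑_{l=1}^{min(k,n)} (-1)^k · ((k-1)!)/((l-1)! · l! · (k-l)!) · (m!/(m-k)!) · (n!/(n-l)!) · (a+k)_{m-k}, where (x)_j = x(x+1)...(x+j-1) is the Pochhammer symbol. -/
/-!
Put `x = -n`. The rising factorial satisfies the mixed Vandermonde identity
`(a + x)_m = ∑_k C(m, k) x^{(k)} (a + k)_{m-k}`, with `x^{(k)}` the falling factorial; it follows by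
induction on `m`, splitting the factor `a + x` as `(a + k) + (x - k)`. At `x = -n` the falling
factorial is `(-1)^k k! multichoose n k`, and Vandermonde's convolution
`multichoose n k = C(n + k - 1, k) = ∑_l C(k - 1, l - 1) C(n, l)` turns each term into the inner sum,
since the factorial quotients of the statement are `m!/(m-k)! · C(k - 1, l - 1) · C(n, l)`.
-/

open Finset

/-- Pochhammer symbol (rising factorial): `(a)_k = a (a+1) ⋯ (a+k-1)`. -/
noncomputable def poch (a : ℂ) (k : ℕ) : ℂ := ∏ j ∈ Finset.range k, (a + j)

open Polynomial

theorem poch_eq_ascPochhammer_eval (a : ℂ) (k : ℕ) : poch a k = (ascPochhammer ℂ k).eval a := by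
  induction k with
  | zero => simp [poch]
  | succ k ih => rw [poch, prod_range_succ, ← poch, ih, ascPochhammer_succ_eval]

section CommRing

variable {R : Type*} [CommRing R]

theorem ascPochhammer_succ_eval_left (m : ℕ) (t : R) :
    (ascPochhammer R (m + 1)).eval t = t * (ascPochhammer R m).eval (t + 1) := by
  rw [ascPochhammer_succ_left, eval_mul, eval_comp]
  simp

theorem ascPochhammer_eval_add_eq_sum (m : ℕ) (x y : R) :
    (ascPochhammer R m).eval (y + x) = ∑ k ∈ range (m + 1),
      (m.choose k : R) * ((descPochhammer R k).eval x * (ascPochhammer R (m - k)).eval (y + k)) := by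
  induction m generalizing y with
  | zero => simp
  | succ m ih =>
    rw [sum_choose_succ_mul
        (fun i j => (descPochhammer R i).eval x * (ascPochhammer R j).eval (y + i)),
      ascPochhammer_succ_eval_left, add_right_comm, ih, mul_sum, ← sum_add_distrib]
    refine sum_congr rfl fun k hk => ?_
    have hsucc : m - k + 1 = m + 1 - k := by grind
    rw [← hsucc, ascPochhammer_succ_eval_left, descPochhammer_succ_eval,
      show y + 1 + (k : R) = y + k + 1 by ring]
    push_cast
    rw [← add_assoc]
    ring

theorem descPochhammer_eval_neg_eq_ascPochhammer (r : R) (k : ℕ) :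
    (descPochhammer R k).eval (-r) = (-1) ^ k * (ascPochhammer R k).eval r := by
  rw [← neg_neg r, ascPochhammer_eval_neg_eq_descPochhammer, neg_neg, ← mul_assoc, ← mul_pow,
    neg_one_mul, neg_neg, one_pow, one_mul]

end CommRing

/-- The cut-off `l ≤ n` matters below: for `l > n` the quotient `n! / (n - l)!` is not zero,
because `n - l` truncates to `0`. -/
theorem Nat.multichoose_eq_sum_choose_mul_choose {k : ℕ} (n : ℕ) (hk : 1 ≤ k) :
    n.multichoose k = ∑ l ∈ Icc 1 (min k n), (k - 1).choose (l - 1) * n.choose l := by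
  rw [Nat.multichoose_eq, show n + k - 1 = n + (k - 1) by omega, Nat.add_choose_eq,
    Nat.sum_antidiagonal_eq_sum_range_succ (fun i j => n.choose i * (k - 1).choose j)]
  symm
  apply sum_subset_zero_on_sdiff
  · intro l hl
    simp only [mem_Icc, mem_range] at hl ⊢
    omega
  · intro l hl
    simp only [mem_sdiff, mem_Icc, mem_range, not_and_or, not_le] at hl
    rcases hl with ⟨hlk, hl | hl⟩
    · simp [show l = 0 by omega, Nat.choose_eq_zero_of_lt (show k - 1 < k by omega)]
    · simp [Nat.choose_eq_zero_of_lt (show n < l by omega)]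
  · intro l hl
    simp only [mem_Icc] at hl
    rw [mul_comm, Nat.choose_symm_of_eq_add (show k - 1 = (l - 1) + (k - l) by omega)]

theorem factorial_quotients_eq_descFactorial_mul_choose_mul_choose {k l m n : ℕ} (hl : 1 ≤ l)
    (hlk : l ≤ k) (hkm : k ≤ m) (hln : l ≤ n) :
    ((k - 1).factorial : ℂ) / ((l - 1).factorial * l.factorial * (k - l).factorial) *
      (m.factorial / (m - k).factorial) * (n.factorial / (n - l).factorial) =
      m.descFactorial k * ((k - 1).choose (l - 1) * n.choose l : ℕ) := by
  have hmk : ((m - k).factorial : ℂ) ≠ 0 := mod_cast (m - k).factorial_ne_zero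
  push_cast
  rw [Nat.cast_choose ℂ (by omega : l - 1 ≤ k - 1), Nat.cast_choose ℂ hln,
    show k - 1 - (l - 1) = k - l by omega, ← Nat.factorial_mul_descFactorial hkm]
  push_cast
  field_simp

theorem choose_mul_descPochhammer_eval_neg_natCast {k m : ℕ} (n : ℕ) (hk : 1 ≤ k)
    (hkm : k ≤ m) :
    (m.choose k : ℂ) * (descPochhammer ℂ k).eval (-(n : ℂ)) =
      ∑ l ∈ Icc 1 (min k n), (-1 : ℂ) ^ k *
        (((k - 1).factorial : ℂ) / ((l - 1).factorial * l.factorial * (k - l).factorial)) *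
        (m.factorial / (m - k).factorial) * (n.factorial / (n - l).factorial) := by
  have hasc : n.ascFactorial k = k.factorial * n.multichoose k := by
    rw [Nat.ascFactorial_eq_factorial_mul_choose', Nat.multichoose_eq]
  rw [descPochhammer_eval_neg_eq_ascPochhammer, ← Nat.cast_ascFactorial, hasc,
    Nat.multichoose_eq_sum_choose_mul_choose n hk]
  simp only [mul_sum, Nat.cast_sum]
  refine sum_congr rfl fun l hl => ?_
  simp only [mem_Icc, le_min_iff] at hl
  have hcoeff :=
    factorial_quotients_eq_descFactorial_mul_choose_mul_choose hl.1 hl.2.1 hkm hl.2.2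
  rw [Nat.descFactorial_eq_factorial_mul_choose] at hcoeff
  push_cast at hcoeff ⊢
  linear_combination -(-1 : ℂ) ^ k * hcoeff

/-- Coefficientwise form of the decomposition of `Η₃`:
`(a-n)_m = (a)_m + ∑_{k=1}^m ∑_{l=1}^{min(k,n)} (-1)^k ((k-1)!/((l-1)! l! (k-l)!))
  (m!/(m-k)!) (n!/(n-l)!) (a+k)_{m-k}`. -/
theorem poch_shift_decomposition (m n : ℕ) (a : ℂ) :
    poch (a - n) m =
      poch a m +
        ∑ k ∈ Finset.Icc 1 m, ∑ l ∈ Finset.Icc 1 (min k n),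
          (-1 : ℂ) ^ k *
            (((k - 1).factorial : ℂ) /
              (((l - 1).factorial : ℂ) * (l.factorial : ℂ) * ((k - l).factorial : ℂ))) *
            ((m.factorial : ℂ) / ((m - k).factorial : ℂ)) *
            ((n.factorial : ℂ) / ((n - l).factorial : ℂ)) *
            poch (a + k) (m - k) := by
  simp only [poch_eq_ascPochhammer_eval]
  rw [sub_eq_add_neg, ascPochhammer_eval_add_eq_sum, Nat.range_succ_eq_Icc_zero,
    ← add_sum_Ioc_eq_sum_Icc (Nat.zero_le m), ← Icc_add_one_left_eq_Ioc]
  simp only [Nat.choose_zero_right, descPochhammer_zero, eval_one, Nat.cast_zero, add_zero,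
    Nat.sub_zero, Nat.cast_one, one_mul, zero_add]
  congr 1
  refine sum_congr rfl fun k hk => ?_
  simp only [mem_Icc] at hk
  rw [← mul_assoc, choose_mul_descPochhammer_eval_neg_natCast n hk.1 hk.2, sum_mul]
end

section
/- Let a, b, d be complex numbers with a not an integer and d not a nonpositive integer, and extend the Pochhammer symbol by (a)_{-j} = 1/(a-j)_j. Then for all natural numbers m, n, the coefficient identity (a)_{m-n}(b)_m/((d)_m m! n!) = ((a)_m(b)_m/((d)_m m!))·((-1)^n/((1-a)_n n!)) + ∑_{k=1}^{m} ∑_{l=1}^{min(k,n)} (-1)^{k+l} ((k-1)!/((l-1)! l! (k-l)!)) ((b)_k/((1-a)_l (d)_k)) · ((a+k)_{m-k}(b+k)_{m-k}/((d+k)_{m-k}(m-k)!)) · ((-1)^{n-l}/((1-a+l)_{n-l}(n-l)!)) holds; equivalently Η₃(a,b;d;x,y) = F(a,b;d;x)·₀F₁(1-a;-y) + ∑_{k≥1}∑_{l=1}^{k} ((-1)^{k+l}(k-1)! (b)_k /((l-1)! l! (k-l)! (1-a)_l (d)_k)) x^k y^l F(a+k,b+k;d+k;x)·₀F₁(1-a+l;-y)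 as formal power series. -/
/-!
With `(a)_{m-n} = (-1)^n (a-n)_m / (1-a)_n`, every term of the identity is a multiple of
`(-1)^n (b)_m / ((d)_m m! n! (1-a)_n)`. In the double sum the `l`-dependence is only through
`C(k-1,l-1) C(n,l)`, which sums to `C(n+k-1,k) = (n)_k / k!` by Vandermonde. What is left,
`∑_{k ≥ 1} C(m,k) (-1)^k (n)_k (a+k)_{m-k}`, equals `(a-n)_m - (a)_m` by the Chu–Vandermonde
identity for falling factorials at `-n` and `a+m-1`, since `(x)_j` is the falling factorial of
`x+j-1`.
-/

open Finset

/-- Generalized Pochhammer symbol for integer index: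
`(a)_z` is the usual rising factorial for `z ≥ 0`, and `(a)_{-j} = 1/(a-j)_j`. -/
noncomputable def pochZ (a : ℂ) : ℤ → ℂ
  | Int.ofNat k => poch a k
  | Int.negSucc j => 1 / poch (a - (j + 1 : ℕ)) (j + 1)

open Polynomial

@[simp] lemma poch_zero (a : ℂ) : poch a 0 = 1 := prod_range_zero _

lemma poch_add (a : ℂ) (j k : ℕ) : poch a (j + k) = poch a j * poch (a + j) k := by
  rw [poch, prod_range_add]
  congr 1
  refine prod_congr rfl fun i _ => ?_
  push_cast
  ring

lemma poch_mul_poch_add_sub {k m : ℕ} (h : k ≤ m) (a : ℂ) :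
    poch a k * poch (a + k) (m - k) = poch a m := by
  rw [← poch_add, Nat.add_sub_cancel' h]

lemma poch_ne_zero {a : ℂ} (h : ∀ j : ℕ, a + j ≠ 0) (k : ℕ) : poch a k ≠ 0 :=
  prod_ne_zero_iff.2 fun j _ => h j

lemma poch_sub_natCast_self (a : ℂ) (n : ℕ) : poch (a - n) n = (-1) ^ n * poch (1 - a) n := by
  rw [poch, poch, ← prod_range_reflect,
    show (-1 : ℂ) ^ n = ∏ _j ∈ range n, (-1 : ℂ) by simp, ← prod_mul_distrib]
  refine prod_congr rfl fun j hj => ?_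
  rw [Nat.sub_sub, Nat.cast_sub (by simp at hj; omega)]
  push_cast
  ring

lemma poch_natCast (n k : ℕ) : poch n k = k.factorial * (n + k - 1).choose k := by
  rw [← Nat.cast_mul, ← Nat.ascFactorial_eq_factorial_mul_choose', poch,
    Nat.ascFactorial_eq_prod_range]
  push_cast
  rfl

lemma pochZ_sub_eq_div {a : ℂ} {n : ℕ} (h : poch (a - n) n ≠ 0) (m : ℕ) :
    pochZ a ((m : ℤ) - n) = poch (a - n) m / poch (a - n) n := by
  rcases le_or_gt n m with hnm | hmn
  · obtain ⟨i, rfl⟩ := Nat.exists_eq_add_of_le hnm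
    rw [show ((n + i : ℕ) : ℤ) - n = i by push_cast; ring, poch_add, sub_add_cancel,
      mul_div_cancel_left₀ _ h]
    rfl
  · obtain ⟨i, rfl⟩ := Nat.exists_eq_add_of_lt hmn
    rw [show (m : ℤ) - ((m + i + 1 : ℕ) : ℤ) = Int.negSucc i by push_cast; omega]
    rw [add_assoc, poch_add,
      show a - ((m + (i + 1) : ℕ) : ℂ) + m = a - (i + 1 : ℕ) by push_cast; ring] at h ⊢
    rw [div_mul_cancel_left₀ (mul_ne_zero_iff.1 h).1]
    exact one_div _

lemma descPochhammer_smeval_eq_prod_range (r : ℂ) (k : ℕ) :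
    (descPochhammer ℤ k).smeval r = ∏ j ∈ range k, (r - j) := by
  rw [← aeval_eq_smeval, aeval_def, ← eval_map, descPochhammer_map,
    descPochhammer_eval_eq_prod_range]

lemma poch_eq_descPochhammer_smeval (a : ℂ) (k : ℕ) :
    poch a k = (descPochhammer ℤ k).smeval (a + k - 1) := by
  rw [descPochhammer_smeval_eq_prod_range, poch, ← prod_range_reflect]
  refine prod_congr rfl fun j hj => ?_
  rw [Nat.sub_sub, Nat.cast_sub (by simp at hj; omega)]
  push_cast
  ring

lemma descPochhammer_smeval_neg (u : ℂ) (k : ℕ) :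
    (descPochhammer ℤ k).smeval (-u) = (-1) ^ k * poch u k := by
  rw [descPochhammer_smeval_eq_prod_range, poch,
    show (-1 : ℂ) ^ k = ∏ _j ∈ range k, (-1 : ℂ) by simp, ← prod_mul_distrib]
  exact prod_congr rfl fun j _ => by ring

theorem poch_sub_eq_sum (u x : ℂ) (m : ℕ) :
    poch (x - u) m =
      ∑ k ∈ range (m + 1), (m.choose k : ℂ) * (-1) ^ k * poch u k * poch (x + k) (m - k) := by
  rw [poch_eq_descPochhammer_smeval, show x - u + m - 1 = -u + (x + m - 1) by ring,
    Ring.descPochhammer_smeval_add _ (Commute.all _ _), Nat.sum_antidiagonal_eq_sum_range_succ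
      (fun i j => (m.choose i : ℂ) *
        ((descPochhammer ℤ i).smeval (-u) * (descPochhammer ℤ j).smeval (x + m - 1)))]
  refine sum_congr rfl fun k hk => ?_
  rw [descPochhammer_smeval_neg, poch_eq_descPochhammer_smeval (x + k),
    Nat.cast_sub (by simp at hk; omega)]
  ring_nf

lemma sum_Icc_choose_mul_poch (u x : ℂ) (m : ℕ) :
    ∑ k ∈ Icc 1 m, (m.choose k : ℂ) * (-1) ^ k * poch u k * poch (x + k) (m - k) =
      poch (x - u) m - poch x m := by
  rw [poch_sub_eq_sum, range_eq_Ico, sum_eq_sum_Ico_succ_bot (by omega : 0 < m + 1), zero_add,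
    Ico_add_one_right_eq_Icc]
  simp

lemma sum_Icc_choose_pred_mul_choose {k : ℕ} (hk : 1 ≤ k) (n : ℕ) :
    ∑ l ∈ Icc 1 (min k n), (k - 1).choose (l - 1) * n.choose l = (n + k - 1).choose k := by
  rw [show n + k - 1 = n + (k - 1) by omega, Nat.add_choose_eq,
    Nat.sum_antidiagonal_eq_sum_range_succ_mk]
  refine sum_subset_zero_on_sdiff (fun l hl => ?_) (fun l hl => ?_) (fun l hl => ?_)
  · simp only [mem_Icc, mem_range] at hl ⊢
    omega
  · simp only [mem_sdiff, mem_Icc, mem_range] at hl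
    rcases Nat.eq_zero_or_pos l with rfl | hl0
    · simp [Nat.choose_eq_zero_of_lt (show k - 1 < k by omega)]
    · simp [Nat.choose_eq_zero_of_lt (show n < l by omega)]
  · simp only [mem_Icc] at hl
    rw [mul_comm, ← Nat.choose_symm (show l - 1 ≤ k - 1 by omega),
      show k - 1 - (l - 1) = k - l by omega]

lemma H3_summand_eq {a b d : ℂ} (ha : ∀ j : ℕ, 1 - a + j ≠ 0)
    (hd : ∀ j : ℕ, d + j ≠ 0) {m n k l : ℕ} (hkm : k ≤ m) (hl : l ∈ Icc 1 (min k n)) :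
    (-1 : ℂ) ^ (k + l) *
        (((k - 1).factorial : ℂ) /
          (((l - 1).factorial : ℂ) * (l.factorial : ℂ) * ((k - l).factorial : ℂ))) *
        (poch b k / (poch (1 - a) l * poch d k)) *
        (poch (a + k) (m - k) * poch (b + k) (m - k) /
          (poch (d + k) (m - k) * ((m - k).factorial : ℂ))) *
        ((-1 : ℂ) ^ (n - l) / (poch (1 - a + l) (n - l) * ((n - l).factorial : ℂ))) =
      ((k - 1).choose (l - 1) * n.choose l : ℕ) * k.factorial *
        (m.choose k * (-1) ^ k * poch (a + k) (m - k) *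
          ((-1) ^ n * poch b m / (poch d m * m.factorial * n.factorial * poch (1 - a) n))) := by
  obtain ⟨hl1, hlk, hln⟩ : 1 ≤ l ∧ l ≤ k ∧ l ≤ n := by
    simp only [mem_Icc, le_min_iff] at hl
    exact ⟨hl.1, hl.2⟩
  have hd_shift (j : ℕ) : d + k + j ≠ 0 := by simpa [add_assoc] using hd (k + j)
  have ha_shift (j : ℕ) : 1 - a + l + j ≠ 0 := by simpa [add_assoc] using ha (l + j)
  rw [← poch_mul_poch_add_sub hkm b, ← poch_mul_poch_add_sub hkm d,
    ← poch_mul_poch_add_sub hln (1 - a), Nat.cast_mul,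
    Nat.cast_choose ℂ (by omega : l - 1 ≤ k - 1), Nat.cast_choose ℂ hln, Nat.cast_choose ℂ hkm,
    show k - 1 - (l - 1) = k - l by omega,
    show (-1 : ℂ) ^ n = (-1) ^ l * (-1) ^ (n - l) by rw [← pow_add, Nat.add_sub_cancel' hln]]
  field_simp [Nat.factorial_ne_zero, poch_ne_zero hd k, poch_ne_zero hd_shift (m - k),
    poch_ne_zero ha l, poch_ne_zero ha_shift (n - l)]
  ring

/-- Decomposition formula (3.19) for `Η₃(a,b;d;x,y)`, coefficient of `x^m y^n`. -/
theorem H3_decomposition (a b d : ℂ) (ha : ∀ z : ℤ, a ≠ (z : ℂ))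
    (hd : ∀ j : ℕ, d ≠ -(j : ℂ)) (m n : ℕ) :
    pochZ a ((m : ℤ) - n) * poch b m / (poch d m * (m.factorial : ℂ) * (n.factorial : ℂ)) =
      poch a m * poch b m / (poch d m * (m.factorial : ℂ)) *
          ((-1 : ℂ) ^ n / (poch (1 - a) n * (n.factorial : ℂ))) +
        ∑ k ∈ Finset.Icc 1 m, ∑ l ∈ Finset.Icc 1 (min k n),
          (-1 : ℂ) ^ (k + l) *
            (((k - 1).factorial : ℂ) /
              (((l - 1).factorial : ℂ) * (l.factorial : ℂ) * ((k - l).factorial : ℂ))) *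
            (poch b k / (poch (1 - a) l * poch d k)) *
            (poch (a + k) (m - k) * poch (b + k) (m - k) /
              (poch (d + k) (m - k) * ((m - k).factorial : ℂ))) *
            ((-1 : ℂ) ^ (n - l) / (poch (1 - a + l) (n - l) * ((n - l).factorial : ℂ))) := by
  have ha' (j : ℕ) : 1 - a + j ≠ 0 := fun h => ha (j + 1) (by push_cast; linear_combination -h)
  have hd' (j : ℕ) : d + j ≠ 0 := fun h => hd j (by linear_combination h)
  have hsign : ((-1 : ℂ) ^ n) ^ 2 = 1 := by rw [← pow_mul, pow_mul', neg_one_sq, one_pow]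
  set F := (-1 : ℂ) ^ n * poch b m / (poch d m * m.factorial * n.factorial * poch (1 - a) n)
    with hF
  calc _ = poch a m * F + (poch (a - n) m - poch a m) * F := by
        rw [pochZ_sub_eq_div (by simp [poch_sub_natCast_self, poch_ne_zero ha']),
          poch_sub_natCast_self, hF]
        field_simp [Nat.factorial_ne_zero, poch_ne_zero ha', poch_ne_zero hd']
        linear_combination -(poch (a - n) m * poch b m) * hsign
    _ = _ := by
        rw [← sum_Icc_choose_mul_poch, sum_mul]
        congr 1
        · rw [hF]
          field_simp [Nat.factorial_ne_zero, poch_ne_zero ha', poch_ne_zero hd']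
        · refine sum_congr rfl fun k hk => ?_
          obtain ⟨hk1, hkm⟩ := mem_Icc.1 hk
          rw [sum_congr rfl fun l hl => H3_summand_eq ha' hd' hkm hl, ← sum_mul, ← sum_mul,
            ← Nat.cast_sum, sum_Icc_choose_pred_mul_choose hk1, poch_natCast]
          ring
end

section
/- Let a be a complex number that is not an integer, and extend the Pochhammer symbol by (a)_{-j} = 1/(a-j)_j for j ≥ 1. Then for all natural numbers m, n: (a)_m/((1-a)_n) = ∑_{k=0}^{n} ∑_{l=0}^{min(k,m)} c_{k,l} · (-1)^{n-l} · (m!/(m-l)!) · (n!/(n-k)!) · (a-k+l)_{(m-l)-(n-k)} / ((1-a)_k (1-a)_{k-l}), where c_{0,0} = 1, c_{k,l} = (k-1)!/((l-1)! l! (k-l)!) for k ≥ 1 and 1 ≤ l ≤ k, and c_{k,0} = 0 for k ≥ 1. -/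
open Finset

/-- The coefficients `c_{k,l}`: `c_{0,0} = 1`, `c_{k,l} = (k-1)!/((l-1)! l! (k-l)!)` for
`k ≥ 1, 1 ≤ l ≤ k`, and `c_{k,0} = 0` for `k ≥ 1`. -/
noncomputable def cCoeff (k l : ℕ) : ℂ :=
  if k = 0 then (if l = 0 then 1 else 0)
  else if l = 0 then 0
  else ((k - 1).factorial : ℂ) /
    (((l - 1).factorial : ℂ) * (l.factorial : ℂ) * ((k - l).factorial : ℂ))

/-! Writing `pochZ x s` as `Γ(x + s) / Γ(x)` shows that for non-integral `x` it is a cocycle,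
`(x)_{s+t} = (x)_s (x+s)_t`. With it and the reflection `(1-a)_j = (-1)^j (a-j)_j`, the `(k, l)`
summand becomes `c_{k,l} m!/(m-l)!` times a factor depending on `k` alone. Vandermonde's identity
sums the first factor over `l` to the multiset coefficient `C(m+k-1, k)`, after which the sum over
`k` is the Chu–Vandermonde expansion of `(a - n + m)_n`; finally `(a)_m = (a)_{m-n} (a-n+m)_n`. -/

lemma poch_succ (x : ℂ) (k : ℕ) : poch x (k + 1) = poch x k * (x + k) :=
  prod_range_succ _ k

open Polynomial in
lemma poch_eq_eval_ascPochhammer (x : ℂ) (k : ℕ) : poch x k = (ascPochhammer ℂ k).eval x := by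
  induction k with
  | zero => simp [poch]
  | succ k ih => simp [poch_succ, ih, ascPochhammer_succ_right]

lemma poch_add_s14 (x : ℂ) (u v : ℕ) : poch x (u + v) = poch x u * poch (x + u) v := by
  simp only [poch, prod_range_add, Nat.cast_add, add_assoc]

open Polynomial in
lemma poch_eq_neg_one_pow_mul_poch (x : ℂ) (k : ℕ) :
    poch x k = (-1) ^ k * poch (1 - x - k) k := by
  rw [poch_eq_eval_ascPochhammer, poch_eq_eval_ascPochhammer, ← neg_neg x,
    ascPochhammer_eval_neg_eq_descPochhammer, descPochhammer_eval_eq_ascPochhammer]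
  ring_nf

lemma neg_one_pow_mul_self {R : Type*} [Monoid R] [HasDistribNeg R] (j : ℕ) :
    ((-1 : R) ^ j) * (-1) ^ j = 1 := by
  rw [← pow_add, ← two_mul, pow_mul, neg_one_sq, one_pow]

lemma natCast_descFactorial_eq_div {K : Type*} [Field K] [CharZero K] {m l : ℕ} (h : l ≤ m) :
    (m.descFactorial l : K) = (m.factorial : K) / ((m - l).factorial : K) := by
  rw [eq_div_iff (Nat.cast_ne_zero.2 (Nat.factorial_ne_zero _)), mul_comm]
  exact_mod_cast Nat.factorial_mul_descFactorial h

section NonInteger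

variable {x : ℂ}

lemma add_intCast_ne_intCast (hx : ∀ z : ℤ, x ≠ z) (c : ℤ) (z : ℤ) : x + c ≠ z := fun h =>
  hx (z - c) (by push_cast; linear_combination h)

lemma one_sub_ne_intCast (hx : ∀ z : ℤ, x ≠ z) (z : ℤ) : 1 - x ≠ z := fun h =>
  hx (1 - z) (by push_cast; linear_combination -h)

lemma poch_ne_zero_s14 (hx : ∀ z : ℤ, x ≠ z) (k : ℕ) : poch x k ≠ 0 :=
  prod_ne_zero_iff.2 fun i _ => by simpa using add_intCast_ne_intCast hx i 0

lemma ne_neg_natCast_of_ne_intCast (hx : ∀ z : ℤ, x ≠ z) (k : ℕ) : x ≠ -k := fun h =>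
  hx (-k) (by simpa using h)

lemma poch_eq_Gamma_div (hx : ∀ k : ℕ, x ≠ -k) (k : ℕ) :
    poch x k = Complex.Gamma (x + k) / Complex.Gamma x := by
  rw [poch_eq_eval_ascPochhammer, Complex.Gamma_add_nat_div_Gamma_eq x hx]

lemma pochZ_eq_Gamma_div (hx : ∀ z : ℤ, x ≠ z) (s : ℤ) :
    pochZ x s = Complex.Gamma (x + s) / Complex.Gamma x := by
  cases s with
  | ofNat k => exact poch_eq_Gamma_div (ne_neg_natCast_of_ne_intCast hx) k
  | negSucc j =>
    have hy : ∀ z : ℤ, x - (j + 1 : ℕ) ≠ z := by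
      simpa [sub_eq_add_neg] using add_intCast_ne_intCast hx (-(j + 1 : ℕ))
    rw [pochZ, poch_eq_Gamma_div (ne_neg_natCast_of_ne_intCast hy), one_div_div, sub_add_cancel,
      Int.cast_negSucc, ← sub_eq_add_neg]

lemma pochZ_add (hx : ∀ z : ℤ, x ≠ z) (s t : ℤ) :
    pochZ x (s + t) = pochZ x s * pochZ (x + s) t := by
  have hxs := add_intCast_ne_intCast hx s
  rw [pochZ_eq_Gamma_div hx, pochZ_eq_Gamma_div hx, pochZ_eq_Gamma_div hxs, Int.cast_add,
    ← add_assoc, div_mul_div_comm, mul_comm, mul_div_mul_right _ _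
      (Complex.Gamma_ne_zero (ne_neg_natCast_of_ne_intCast hxs))]

end NonInteger

lemma cCoeff_mul_descFactorial {k l : ℕ} (m : ℕ) (hk : k ≠ 0) (hl : l ≤ k) :
    cCoeff k l * m.descFactorial l = m.choose l * (k - 1).choose (k - l) := by
  rcases Nat.eq_zero_or_pos l with rfl | hl0
  · simp [cCoeff, hk, Nat.choose_eq_zero_of_lt (Nat.sub_one_lt hk)]
  · rw [cCoeff, if_neg hk, if_neg hl0.ne', Nat.descFactorial_eq_factorial_mul_choose,
      Nat.cast_mul, Nat.cast_choose ℂ (show k - l ≤ k - 1 by omega),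
      show k - 1 - (k - l) = l - 1 by omega]
    have := Nat.factorial_ne_zero l
    field_simp

lemma sum_cCoeff_mul_descFactorial (k m : ℕ) :
    ∑ l ∈ range (min k m + 1), cCoeff k l * m.descFactorial l = m.multichoose k := by
  rcases Nat.eq_zero_or_pos k with rfl | hk
  · simp [cCoeff]
  have hext : ∑ l ∈ range (min k m + 1), cCoeff k l * m.descFactorial l =
      ∑ l ∈ range (k + 1), cCoeff k l * m.descFactorial l := by
    refine sum_subset (range_subset_range.2 (by omega)) fun l hl hlm => ?_
    simp only [mem_range] at hl hlm
    rw [Nat.descFactorial_eq_zero_iff_lt.2 (by omega), Nat.cast_zero, mul_zero]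
  rw [hext, sum_congr rfl fun l hl =>
      cCoeff_mul_descFactorial m hk.ne' (Nat.lt_succ_iff.1 (mem_range.1 hl)),
    Nat.multichoose_eq, show m + k - 1 = m + (k - 1) by omega, Nat.add_choose_eq,
    Nat.sum_antidiagonal_eq_sum_range_succ fun i j => m.choose i * (k - 1).choose j]
  push_cast
  rfl

lemma multichoose_mul_descFactorial (m n k : ℕ) :
    (m.multichoose k * n.descFactorial k : ℂ) = n.choose k * poch m k := by
  rw [poch_eq_eval_ascPochhammer, ← ascPochhammer_eval_cast, ascPochhammer_nat_eq_ascFactorial,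
    Nat.ascFactorial_eq_factorial_mul_choose', Nat.descFactorial_eq_factorial_mul_choose,
    ← Nat.multichoose_eq]
  push_cast
  ring

lemma poch_add_eq_sum_antidiagonal (x y : ℂ) (n : ℕ) :
    poch (x + y) n = ∑ ij ∈ antidiagonal n, n.choose ij.1 * (poch x ij.1 * poch y ij.2) := by
  induction n with
  | zero => simp [poch]
  | succ n ih =>
    rw [sum_antidiagonal_choose_succ_mul (fun i j => poch x i * poch y j), poch_succ, ih,
      sum_mul, ← sum_add_distrib]
    refine sum_congr rfl fun ij hij => ?_
    rw [HasAntidiagonal.mem_antidiagonal] at hij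
    rw [Nat.choose_symm_of_eq_add hij.symm, poch_succ, poch_succ, ← hij]
    push_cast
    ring

lemma pochZ_sub_add_div_poch_one_sub {a : ℂ} (ha : ∀ z : ℤ, a ≠ z) (j : ℕ) (s : ℤ) :
    pochZ (a - j) (j + s) / poch (1 - a) j = (-1) ^ j * pochZ a s := by
  have haj : ∀ z : ℤ, a - j ≠ z := by
    simpa [sub_eq_add_neg] using add_intCast_ne_intCast ha (-j)
  rw [pochZ_add haj, Int.cast_natCast, sub_add_cancel, poch_eq_neg_one_pow_mul_poch (1 - a),
    show 1 - (1 - a) - j = a - j by ring,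
    div_eq_iff (mul_ne_zero (pow_ne_zero _ (by norm_num)) (poch_ne_zero_s14 haj j))]
  change poch (a - j) j * pochZ a s = _
  linear_combination -(pochZ a s * poch (a - j) j) * neg_one_pow_mul_self (R := ℂ) j

lemma neg_one_pow_div_poch_one_sub {a : ℂ} (ha : ∀ z : ℤ, a ≠ z) {k n : ℕ} (hkn : k ≤ n) :
    (-1) ^ (n - k) / poch (1 - a) k = poch (a - n) (n - k) / poch (1 - a) n := by
  have hsplit := poch_add_s14 (1 - a) k (n - k)
  rw [Nat.add_sub_cancel' hkn, poch_eq_neg_one_pow_mul_poch (1 - a + k),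
    show 1 - (1 - a + k) - ((n - k : ℕ) : ℂ) = a - n by push_cast [Nat.cast_sub hkn]; ring]
    at hsplit
  rw [div_eq_div_iff (poch_ne_zero_s14 (one_sub_ne_intCast ha) k)
    (poch_ne_zero_s14 (one_sub_ne_intCast ha) n), hsplit]
  linear_combination
    (poch (1 - a) k * poch (a - n) (n - k)) * neg_one_pow_mul_self (R := ℂ) (n - k)

lemma inverse_decomposition_summand_eq {a : ℂ} (ha : ∀ z : ℤ, a ≠ z) {m n k l : ℕ}
    (hlk : l ≤ k) (hkn : k ≤ n) (hlm : l ≤ m) :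
    cCoeff k l * (-1 : ℂ) ^ (n - l) * ((m.factorial : ℂ) / ((m - l).factorial : ℂ)) *
        ((n.factorial : ℂ) / ((n - k).factorial : ℂ)) *
        pochZ (a - k + l) (((m : ℤ) - l) - ((n : ℤ) - k)) /
        (poch (1 - a) k * poch (1 - a) (k - l)) =
      cCoeff k l * m.descFactorial l *
        ((-1) ^ (n - k) * n.descFactorial k * pochZ a (m - n) / poch (1 - a) k) := by
  have hZ := pochZ_sub_add_div_poch_one_sub ha (k - l) (m - n)
  rw [show a - ((k - l : ℕ) : ℂ) = a - k + l by push_cast [Nat.cast_sub hlk]; ring,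
    show ((k - l : ℕ) : ℤ) + (m - n) = ((m : ℤ) - l) - ((n : ℤ) - k) by
      push_cast [Nat.cast_sub hlk]; ring] at hZ
  have hsign : (-1 : ℂ) ^ (n - l) * (-1) ^ (k - l) = (-1) ^ (n - k) := by
    rw [show n - l = (n - k) + (k - l) by omega, pow_add, mul_assoc, neg_one_pow_mul_self,
      mul_one]
  rw [mul_comm (poch (1 - a) k), ← div_div, mul_div_assoc, hZ,
    natCast_descFactorial_eq_div hlm, natCast_descFactorial_eq_div hkn, ← hsign]
  ring

/-- Coefficientwise form of the inverse decomposition formula (3.26). -/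
theorem H5_inverse_decomposition (a : ℂ) (ha : ∀ z : ℤ, a ≠ (z : ℂ)) (m n : ℕ) :
    poch a m / poch (1 - a) n =
      ∑ k ∈ Finset.range (n + 1), ∑ l ∈ Finset.range (min k m + 1),
        cCoeff k l * (-1 : ℂ) ^ (n - l) *
          ((m.factorial : ℂ) / ((m - l).factorial : ℂ)) *
          ((n.factorial : ℂ) / ((n - k).factorial : ℂ)) *
          pochZ (a - k + l) (((m : ℤ) - l) - ((n : ℤ) - k)) /
          (poch (1 - a) k * poch (1 - a) (k - l)) := by
  set Z := pochZ a ((m : ℤ) - n)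
  have hsplit : poch a m = Z * poch (m + (a - n)) n := by
    have h := pochZ_add ha ((m : ℤ) - n) n
    rwa [sub_add_cancel, show a + (((m : ℤ) - n : ℤ) : ℂ) = m + (a - n) by push_cast; ring] at h
  symm
  calc _ = ∑ k ∈ range (n + 1), (∑ l ∈ range (min k m + 1), cCoeff k l * m.descFactorial l) *
          ((-1) ^ (n - k) * n.descFactorial k * Z / poch (1 - a) k) := by
        refine sum_congr rfl fun k hk => ?_
        rw [sum_mul]
        refine sum_congr rfl fun l hl => ?_
        simp only [mem_range] at hk hl
        exact inverse_decomposition_summand_eq ha (by omega) (by omega) (by omega)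
    _ = ∑ k ∈ range (n + 1), n.choose k * (poch m k * poch (a - n) (n - k)) *
          (Z / poch (1 - a) n) := by
        refine sum_congr rfl fun k hk => ?_
        have hkn : k ≤ n := Nat.lt_succ_iff.1 (mem_range.1 hk)
        calc (∑ l ∈ range (min k m + 1), cCoeff k l * m.descFactorial l) *
              ((-1) ^ (n - k) * n.descFactorial k * Z / poch (1 - a) k)
            = (m.multichoose k * n.descFactorial k) * Z * ((-1) ^ (n - k) / poch (1 - a) k) := by
              rw [sum_cCoeff_mul_descFactorial]; ring
          _ = _ := by
              rw [multichoose_mul_descFactorial, neg_one_pow_div_poch_one_sub ha hkn]; ring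
    _ = poch a m / poch (1 - a) n := by
        rw [← sum_mul, ← Nat.sum_antidiagonal_eq_sum_range_succ
          (fun i j => n.choose i * (poch m i * poch (a - n) j)), ← poch_add_eq_sum_antidiagonal,
          hsplit]
        ring
end
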